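/- Generalized SBS theorem: Let ρ be a density matrix on ℂ^d ⊗ (ℂ^{D_1} ⊗ ⋯ ⊗ ℂ^{D_N}). The following are equivalent. (i) There exist a finite index set I, an orthonormal family {e_i}_{i∈I} in ℂ^d, and for each k ∈ {1,…,N} orthogonal projectors {Π_i^k}_{i∈I} on ℂ^{D_k} with Π_i^k Π_j^k = 0 for i ≠ j, such that ∑_{i∈I} (|e_i⟩⟨e_i| ⊗ Π_i^1 ⊗ ⋯ ⊗ Π_i^N) ρ (|e_i⟩⟨e_i| ⊗ Π_i^1 ⊗ ⋯ ⊗ Π_i^N) = ρ. (ii) There exist a finite index set I, an orthonormal family {e_i}_{i∈I} in ℂ^d, probabilities p_i, and density matrices ϱ_i on ℂ^{D_1} ⊗ ⋯ ⊗ ℂ^{D_N} such that ρ = ∑_i p_i |e_i⟩⟨e_i| ⊗ ϱ_i and, for every nonempty subset K ⊆ {1,…,N}, the reductions ϱ_i^K (partial trace over the complement of K) satisfy ϱ_i^K ϱ_j^K = 0 whenever i ≠ j and p_i, p_j > 0. -/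

import Mathlib

open scoped Kronecker Matrix ComplexOrder BigOperators
open Matrix

noncomputable section

/-- The rank-one operator `|v⟩⟨w| = v wᴴ`. -/
def ketBra {n : Type*} (v w : n → ℂ) : Matrix n n ℂ := Matrix.vecMulVec v (star w)

/-- A density matrix: positive semidefinite with unit trace. -/
def IsDensityMatrix {n : Type*} [Fintype n] (ρ : Matrix n n ℂ) : Prop :=
  ρ.PosSemidef ∧ ρ.trace = 1

/-- An orthonormal family of vectors. -/
def OrthonormalFamily {n I : Type*} [Fintype n] [DecidableEq I] (e : I → n → ℂ) : Prop :=
  ∀ i j, star (e i) ⬝ᵥ e j = (if i = j then 1 else 0)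

/-- The `N`-fold Kronecker (tensor) product of a family of matrices. -/
def tensorFamily {N : ℕ} {D : Fin N → ℕ} (M : ∀ k, Matrix (Fin (D k)) (Fin (D k)) ℂ) :
    Matrix (∀ k, Fin (D k)) (∀ k, Fin (D k)) ℂ :=
  fun a a' => ∏ k, M k (a k) (a' k)

/-- The Kronecker (tensor) product of the matrices `M k` over the factors `k ∈ K`. -/
def tensorOn {N : ℕ} {D : Fin N → ℕ} (K : Finset (Fin N))
    (M : ∀ k, Matrix (Fin (D k)) (Fin (D k)) ℂ) :
    Matrix (∀ k : K, Fin (D k.1)) (∀ k : K, Fin (D k.1)) ℂ :=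
  fun a a' => ∏ k : K, M k.1 (a k) (a' k)

/-- The partial trace of a matrix on an `N`-fold tensor product over all
tensor factors *not* in `K` (entrywise: sum over equal indices in the traced factors). -/
def reduceTo {N : ℕ} {D : Fin N → ℕ} (K : Finset (Fin N))
    (M : Matrix (∀ k, Fin (D k)) (∀ k, Fin (D k)) ℂ) :
    Matrix (∀ k : K, Fin (D k.1)) (∀ k : K, Fin (D k.1)) ℂ :=
  fun a a' => ∑ b : ∀ k : {k : Fin N // k ∉ K}, Fin (D k.1),
    M (fun k => if h : k ∈ K then a ⟨k, h⟩ else b ⟨k, h⟩)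
      (fun k => if h : k ∈ K then a' ⟨k, h⟩ else b ⟨k, h⟩)

/-- The single-party reduction: the partial trace over all tensor factors except the `k`-th. -/
def reduceSingle {N : ℕ} {D : Fin N → ℕ} (k : Fin N)
    (M : Matrix (∀ l, Fin (D l)) (∀ l, Fin (D l)) ℂ) :
    Matrix (Fin (D k)) (Fin (D k)) ℂ :=
  fun a a' => ∑ b : ∀ l : {l : Fin N // l ≠ k}, Fin (D l.1),
    M (fun l => if h : l = k then cast (congrArg (fun i => Fin (D i)) h.symm) a else b ⟨l, h⟩)
      (fun l => if h : l = k then cast (congrArg (fun i => Fin (D i)) h.symm) a' else b ⟨l, h⟩)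

/-!
In branch `i` of a non-disturbing measurement the environment is left in the unnormalised state
`σᵢ = (⟨eᵢ| ⊗ Πᵢ) ρ (|eᵢ⟩ ⊗ Πᵢ)`, `Πᵢ = ⊗ₖ Πᵢᵏ`, which is fixed by each `Πᵢᵏ` acting on its
factor. Hence its reduction to a nonempty set `K` of observers is sandwiched between copies of
`⊗_{k ∈ K} Πᵢᵏ`, and these are mutually orthogonal for different `i`. Conversely, for an SBS state
take `Πᵢᵏ` to be the support projection of the single-observer reduction `ϱᵢ^{k}`: orthogonal
reductions have orthogonal supports, and a positive semidefinite operator is fixed by `⊗ₖ Qₖ` as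
soon as each single-factor reduction is fixed by `Qₖ`, because `(1 - Qₖ) ⊗ 1` sandwiches it to an
operator of trace zero.
-/

namespace Matrix

variable {m n R 𝕜 : Type*} [Fintype n] [RCLike 𝕜]

theorem PosSemidef.mul_eq_zero_of_trace_sandwich [Fintype m] {ϱ : Matrix n n 𝕜} (hϱ : ϱ.PosSemidef)
    {A : Matrix n m 𝕜} (h : (Aᴴ * ϱ * A).trace = 0) : ϱ * A = 0 := by
  classical
  obtain ⟨B, rfl⟩ : ∃ B : Matrix n n 𝕜, ϱ = star B * B := by
    open scoped MatrixOrder Matrix.Norms.L2Operator in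
    exact CStarAlgebra.nonneg_iff_eq_star_mul_self.mp hϱ.nonneg
  have hBA : B * A = 0 := by
    rw [← trace_conjTranspose_mul_self_eq_zero_iff, ← h, conjTranspose_mul]
    simp only [star_eq_conjTranspose, Matrix.mul_assoc]
  rw [Matrix.mul_assoc, hBA, Matrix.mul_zero]

theorem PosSemidef.trace_eq_re {σ : Matrix n n ℂ} (hσ : σ.PosSemidef) :
    σ.trace = (σ.trace.re : ℂ) :=
  Complex.eq_re_of_ofReal_le (r := 0) (by rw [Complex.ofReal_zero]; exact hσ.trace_nonneg)

theorem PosSemidef.re_trace_nonneg {σ : Matrix n n ℂ} (hσ : σ.PosSemidef) : 0 ≤ σ.trace.re :=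
  (Complex.nonneg_iff.mp hσ.trace_nonneg).1

theorem PosSemidef.exists_eq_smul_isDensityMatrix [DecidableEq n] [Nonempty n]
    {σ : Matrix n n ℂ} (hσ : σ.PosSemidef) : ∃ ϱ, IsDensityMatrix ϱ ∧ σ = (σ.trace.re : ℂ) • ϱ := by
  have ht := hσ.trace_eq_re
  set t := σ.trace.re
  by_cases h0 : t = 0
  · obtain ⟨a⟩ := ‹Nonempty n›
    refine ⟨diagonal (Pi.single a 1), ⟨posSemidef_diagonal_iff.mpr fun b => ?_, by simp⟩, ?_⟩
    · by_cases hb : b = a <;> simp [hb]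
    · rw [h0, Complex.ofReal_zero, zero_smul, ← hσ.trace_eq_zero_iff, ht, h0, Complex.ofReal_zero]
  · refine ⟨((t⁻¹ : ℝ) : ℂ) • σ,
      ⟨hσ.smul (Complex.zero_le_real.mpr (inv_nonneg.mpr hσ.re_trace_nonneg)), ?_⟩, ?_⟩
    · rw [trace_smul, smul_eq_mul, ht, ← Complex.ofReal_mul, inv_mul_cancel₀ h0,
        Complex.ofReal_one]
    · rw [smul_smul, ← Complex.ofReal_mul, mul_inv_cancel₀ h0, Complex.ofReal_one, one_smul]

theorem prod_one_apply {ι : Type*} [Fintype ι] [CommSemiring R] {α : ι → Type*}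
    [∀ i, DecidableEq (α i)] (b b' : ∀ i, α i) :
    ∏ i, (1 : Matrix (α i) (α i) R) (b i) (b' i) = (1 : Matrix (∀ i, α i) (∀ i, α i) R) b b' := by
  simp [one_apply, Finset.prod_boole, funext_iff]

section SupportProjection

variable [DecidableEq n]

/-- The orthogonal projection onto the range of a Hermitian matrix (`0⁻¹ = 0` makes `x⁻¹ * x`
the indicator of `x ≠ 0`). -/
def supportProj (r : Matrix n n 𝕜) : Matrix n n 𝕜 := cfc (fun x : ℝ => x⁻¹ * x) r

theorem isHermitian_supportProj (r : Matrix n n 𝕜) : (supportProj r).IsHermitian :=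
  cfc_predicate _ r

theorem supportProj_mul_supportProj (r : Matrix n n 𝕜) :
    supportProj r * supportProj r = supportProj r := by
  rw [supportProj, ← cfc_mul _ _ _ (r.finite_real_spectrum.continuousOn _)
    (r.finite_real_spectrum.continuousOn _)]
  refine cfc_congr fun x _ => ?_
  by_cases hx : x = 0 <;> simp [hx]

theorem supportProj_mul_eq_zero {r M : Matrix n n 𝕜} (hr : r.IsHermitian) (h : r * M = 0) :
    supportProj r * M = 0 := by
  rw [supportProj, cfc_mul (fun x : ℝ => x⁻¹) (fun x => x) r
    (r.finite_real_spectrum.continuousOn _), cfc_id' ℝ r hr.isSelfAdjoint, Matrix.mul_assoc, h,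
    Matrix.mul_zero]

theorem supportProj_mul_self {r : Matrix n n 𝕜} (hr : r.IsHermitian) : supportProj r * r = r := by
  calc supportProj r * r = cfc (fun x : ℝ => x⁻¹ * x * x) r := by
        rw [cfc_mul _ _ _ (r.finite_real_spectrum.continuousOn _), cfc_id' ℝ r hr.isSelfAdjoint]
        rfl
    _ = r := by
      conv_rhs => rw [← cfc_id' ℝ r hr.isSelfAdjoint]
      refine cfc_congr fun x _ => ?_
      by_cases hx : x = 0 <;> simp [hx]

theorem supportProj_mul_supportProj_eq_zero {r s : Matrix n n 𝕜} (hr : r.IsHermitian)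
    (hs : s.IsHermitian) (h : r * s = 0) : supportProj r * supportProj s = 0 := by
  have h₁ : s * supportProj r = 0 := by
    simpa [hs.eq, (isHermitian_supportProj r).eq] using
      congrArg conjTranspose (supportProj_mul_eq_zero hr h)
  simpa [(isHermitian_supportProj r).eq, (isHermitian_supportProj s).eq] using
    congrArg conjTranspose (supportProj_mul_eq_zero hs h₁)

end SupportProjection

section TraceRight

def traceRight [AddCommMonoid R] (X : Matrix (m × n) (m × n) R) : Matrix m m R :=
  of fun a a' => ∑ b, X (a, b) (a', b)

theorem traceRight_kronecker_one_mul [Fintype m] [DecidableEq n] [Semiring R] (A : Matrix m m R)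
    (X : Matrix (m × n) (m × n) R) :
    traceRight ((A ⊗ₖ (1 : Matrix n n R)) * X) = A * traceRight X := by
  ext a a'
  simp only [traceRight, of_apply, mul_apply, kroneckerMap_apply, one_apply, mul_ite, mul_one,
    mul_zero, ite_mul, zero_mul, Fintype.sum_prod_type, Finset.sum_ite_eq, Finset.mem_univ,
    if_true, Finset.mul_sum]
  exact Finset.sum_comm

theorem traceRight_mul_kronecker_one [Fintype m] [DecidableEq n] [Semiring R] (A : Matrix m m R)
    (X : Matrix (m × n) (m × n) R) :
    traceRight (X * (A ⊗ₖ (1 : Matrix n n R))) = traceRight X * A := by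
  ext a a'
  simp only [traceRight, of_apply, mul_apply, kroneckerMap_apply, one_apply, mul_ite, mul_one,
    mul_zero, Fintype.sum_prod_type, Finset.sum_ite_eq', Finset.mem_univ, if_true, Finset.sum_mul]
  exact Finset.sum_comm

theorem trace_traceRight [Fintype m] [AddCommMonoid R] (X : Matrix (m × n) (m × n) R) :
    (traceRight X).trace = X.trace := by
  simp [traceRight, trace, Fintype.sum_prod_type]

theorem traceRight_conjTranspose [AddCommMonoid R] [StarAddMonoid R]
    (X : Matrix (m × n) (m × n) R) : traceRight Xᴴ = (traceRight X)ᴴ := by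
  ext a a'
  simp [traceRight, star_sum]

theorem PosSemidef.mul_kronecker_one_eq_self [Fintype m] [DecidableEq m] [DecidableEq n]
    {ϱ : Matrix (m × n) (m × n) 𝕜} (hϱ : ϱ.PosSemidef) {Q : Matrix m m 𝕜} (hQ : Q.IsHermitian)
    (h : Q * traceRight ϱ = traceRight ϱ) : ϱ * (Q ⊗ₖ (1 : Matrix n n 𝕜)) = ϱ := by
  have hA : ((1 - Q) ⊗ₖ (1 : Matrix n n 𝕜))ᴴ = (1 - Q) ⊗ₖ (1 : Matrix n n 𝕜) := by
    rw [conjTranspose_kronecker, conjTranspose_sub, hQ.eq, conjTranspose_one, conjTranspose_one]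
  have hzero : ϱ * ((1 - Q) ⊗ₖ (1 : Matrix n n 𝕜)) = 0 := by
    refine hϱ.mul_eq_zero_of_trace_sandwich ?_
    rw [hA, ← trace_traceRight, traceRight_mul_kronecker_one, traceRight_kronecker_one_mul,
      Matrix.sub_mul, h, Matrix.one_mul, sub_self, Matrix.zero_mul, trace_zero]
  have hsub : (1 - Q) ⊗ₖ (1 : Matrix n n 𝕜) = 1 - Q ⊗ₖ 1 := by
    ext ⟨a, b⟩ ⟨a', b'⟩
    by_cases ha : a = a' <;> by_cases hb : b = b' <;> simp [ha, hb]
  rwa [hsub, Matrix.mul_sub, Matrix.mul_one, sub_eq_zero, eq_comm] at hzero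

end TraceRight

end Matrix

section TensorFamily

variable {N : ℕ} {D : Fin N → ℕ} {K : Finset (Fin N)} {M : ∀ k, Matrix (Fin (D k)) (Fin (D k)) ℂ}

theorem tensorFamily_one : tensorFamily (fun k => (1 : Matrix (Fin (D k)) (Fin (D k)) ℂ)) = 1 := by
  ext a b
  exact prod_one_apply a b

theorem tensorFamily_mul (M M' : ∀ k, Matrix (Fin (D k)) (Fin (D k)) ℂ) :
    tensorFamily M * tensorFamily M' = tensorFamily (fun k => M k * M' k) := by
  ext a b
  simp only [tensorFamily, mul_apply, Finset.prod_univ_sum, Finset.prod_mul_distrib]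
  rfl

theorem conjTranspose_tensorFamily (M : ∀ k, Matrix (Fin (D k)) (Fin (D k)) ℂ) :
    (tensorFamily M)ᴴ = tensorFamily (fun k => (M k)ᴴ) := by
  ext a b
  simp [tensorFamily, star_prod]

theorem tensorOn_mul (K : Finset (Fin N)) (M M' : ∀ k, Matrix (Fin (D k)) (Fin (D k)) ℂ) :
    tensorOn K M * tensorOn K M' = tensorOn K (fun k => M k * M' k) := by
  ext a b
  simp only [tensorOn, mul_apply, Finset.prod_univ_sum, Finset.prod_mul_distrib]
  rfl

theorem tensorOn_eq_zero {k : Fin N} (hk : k ∈ K) (h : M k = 0) : tensorOn K M = 0 := by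
  ext a b
  exact Finset.prod_eq_zero (Finset.mem_univ ⟨k, hk⟩) (by simp [h])

theorem tensorFamily_ite_insert {k : Fin N} {S : Finset (Fin N)} (hk : k ∉ S)
    (M : ∀ k, Matrix (Fin (D k)) (Fin (D k)) ℂ) :
    tensorFamily (fun l => if l ∈ insert k S then M l else 1) =
      tensorFamily (fun l => if l ∈ ({k} : Finset (Fin N)) then M l else 1) *
        tensorFamily (fun l => if l ∈ S then M l else 1) := by
  rw [tensorFamily_mul]
  congr 1
  funext l
  by_cases hl : l = k
  · subst hl
    simp [hk]
  · simp [hl]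

theorem tensorOn_ite (K : Finset (Fin N)) (M : ∀ k, Matrix (Fin (D k)) (Fin (D k)) ℂ) :
    tensorOn K (fun l => if l ∈ K then M l else 1) = tensorOn K M := by
  ext a b
  exact Finset.prod_congr rfl fun l _ => by simp [l.2]

theorem tensorOn_singleton (k : Fin N) (M : ∀ k, Matrix (Fin (D k)) (Fin (D k)) ℂ) :
    tensorOn {k} M = (M k).submatrix (Equiv.piUnique _) (Equiv.piUnique _) := by
  ext a b
  exact Fintype.prod_unique _

end TensorFamily

section Reduction

variable {N : ℕ} {D : Fin N → ℕ} {K : Finset (Fin N)}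
  {M : ∀ k, Matrix (Fin (D k)) (Fin (D k)) ℂ} {X : Matrix (∀ k, Fin (D k)) (∀ k, Fin (D k)) ℂ}

def splitAt (K : Finset (Fin N)) :
    (∀ k, Fin (D k)) ≃ (∀ k : K, Fin (D k.1)) × (∀ k : {k : Fin N // k ∉ K}, Fin (D k.1)) :=
  Equiv.piEquivPiSubtypeProd (· ∈ K) _

theorem reduceTo_eq_traceRight (K : Finset (Fin N))
    (X : Matrix (∀ k, Fin (D k)) (∀ k, Fin (D k)) ℂ) :
    reduceTo K X = traceRight (reindex (splitAt K) (splitAt K) X) :=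
  rfl

theorem reindex_splitAt_tensorFamily (hM : ∀ l ∉ K, M l = 1) :
    reindex (splitAt K) (splitAt K) (tensorFamily M) = tensorOn K M ⊗ₖ 1 := by
  ext ⟨a, b⟩ ⟨a', b'⟩
  rw [reindex_apply, submatrix_apply, kroneckerMap_apply, tensorFamily,
    ← Fintype.prod_subtype_mul_prod_subtype (· ∈ K), ← prod_one_apply]
  congr 1
  · exact Finset.prod_congr (by ext; simp) fun l _ => by simp [splitAt, l.2]
  · exact Finset.prod_congr rfl fun l _ => by simp [splitAt, l.2, hM l.1 l.2]

theorem reindex_splitAt_mul (X Y : Matrix (∀ k, Fin (D k)) (∀ k, Fin (D k)) ℂ) :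
    reindex (splitAt K) (splitAt K) (X * Y) =
      reindex (splitAt K) (splitAt K) X * reindex (splitAt K) (splitAt K) Y :=
  (submatrix_mul_equiv X Y _ _ _).symm

theorem reduceTo_tensorFamily_mul (hM : ∀ l ∉ K, M l = 1) :
    reduceTo K (tensorFamily M * X) = tensorOn K M * reduceTo K X := by
  rw [reduceTo_eq_traceRight, reindex_splitAt_mul, reindex_splitAt_tensorFamily hM,
    traceRight_kronecker_one_mul, reduceTo_eq_traceRight]

theorem reduceTo_mul_tensorFamily (hM : ∀ l ∉ K, M l = 1) :
    reduceTo K (X * tensorFamily M) = reduceTo K X * tensorOn K M := by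
  rw [reduceTo_eq_traceRight, reindex_splitAt_mul, reindex_splitAt_tensorFamily hM,
    traceRight_mul_kronecker_one, reduceTo_eq_traceRight]

theorem Matrix.IsHermitian.reduceTo (K : Finset (Fin N)) (hX : X.IsHermitian) :
    (reduceTo K X).IsHermitian := by
  rw [reduceTo_eq_traceRight, IsHermitian, ← traceRight_conjTranspose, conjTranspose_reindex,
    hX.eq]

theorem reduceTo_smul (K : Finset (Fin N)) (c : ℂ)
    (X : Matrix (∀ k, Fin (D k)) (∀ k, Fin (D k)) ℂ) :
    reduceTo K (c • X) = c • reduceTo K X := by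
  ext a b
  simp [reduceTo, Finset.mul_sum]

theorem reduceTo_mul_reduceTo_eq_zero {Y : Matrix (∀ k, Fin (D k)) (∀ k, Fin (D k)) ℂ}
    {M' : ∀ k, Matrix (Fin (D k)) (Fin (D k)) ℂ} (hM : ∀ l ∉ K, M l = 1) (hM' : ∀ l ∉ K, M' l = 1)
    (hX : X * tensorFamily M = X) (hY : tensorFamily M' * Y = Y) {k : Fin N} (hk : k ∈ K)
    (hMM' : M k * M' k = 0) : reduceTo K X * reduceTo K Y = 0 := by
  rw [← hX, ← hY, reduceTo_mul_tensorFamily hM, reduceTo_tensorFamily_mul hM', Matrix.mul_assoc,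
    ← Matrix.mul_assoc (tensorOn K M), tensorOn_mul, tensorOn_eq_zero hk hMM', Matrix.zero_mul,
    Matrix.mul_zero]

theorem Matrix.PosSemidef.mul_tensorFamily_eq_self (hX : X.PosSemidef) (hM : ∀ l ∉ K, M l = 1)
    (hQ : (tensorOn K M).IsHermitian) (h : tensorOn K M * reduceTo K X = reduceTo K X) :
    X * tensorFamily M = X := by
  have := (hX.submatrix (splitAt K).symm).mul_kronecker_one_eq_self hQ h
  rw [← reindex_splitAt_tensorFamily hM] at this
  exact (reindex (splitAt K) (splitAt K)).injective ((reindex_splitAt_mul _ _).trans this)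

theorem Matrix.PosSemidef.mul_tensorFamily_eq_self_of_forall_singleton (hX : X.PosSemidef)
    (hM : ∀ k, (M k).IsHermitian) (h : ∀ k, tensorOn {k} M * reduceTo {k} X = reduceTo {k} X) :
    X * tensorFamily M = X := by
  suffices ∀ S : Finset (Fin N), X * tensorFamily (fun l => if l ∈ S then M l else 1) = X by
    simpa using this Finset.univ
  intro S
  induction S using Finset.induction_on with
  | empty => simp [tensorFamily_one]
  | insert k S hk ih =>
    have hXk : X * tensorFamily (fun l => if l ∈ ({k} : Finset (Fin N)) then M l else 1) = X := by
      refine hX.mul_tensorFamily_eq_self (fun l hl => if_neg hl) ?_ ?_ <;>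
        rw [tensorOn_ite]
      · rw [tensorOn_singleton]
        exact (hM k).submatrix _
      · exact h k
    rw [tensorFamily_ite_insert hk, ← Matrix.mul_assoc, hXk, ih]

end Reduction

section SystemEnvironment

variable {S E ι : Type*} [Fintype E] [DecidableEq ι]

def ketKron (E : Type*) [DecidableEq E] (v : S → ℂ) : Matrix (S × E) E ℂ :=
  Matrix.of fun p b => v p.1 * (1 : Matrix E E ℂ) p.2 b

theorem ketBra_kronecker [DecidableEq E] (v w : S → ℂ) (T : Matrix E E ℂ) :
    ketBra v w ⊗ₖ T = ketKron E v * T * (ketKron E w)ᴴ := by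
  ext ⟨x, a⟩ ⟨y, b⟩
  simp only [ketBra, ketKron, kroneckerMap_apply, vecMulVec_apply, mul_apply, of_apply,
    conjTranspose_apply, Pi.star_apply, one_apply, apply_ite, star_zero, mul_one, mul_zero,
    ite_mul, zero_mul, Finset.sum_ite_eq, Finset.mem_univ, if_true]
  ring

theorem ketBra_kronecker_conjTranspose_mul_mul [Fintype S] [DecidableEq E] (v : S → ℂ)
    (T : Matrix E E ℂ) (X : Matrix (S × E) (S × E) ℂ) :
    ketBra v v ⊗ₖ ((ketKron E v * T)ᴴ * X * (ketKron E v * T)) =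
      (ketBra v v ⊗ₖ Tᴴ) * X * (ketBra v v ⊗ₖ T) := by
  simp only [ketBra_kronecker, conjTranspose_mul, Matrix.mul_assoc]

theorem OrthonormalFamily.ketBra_mul_ketBra [Fintype S] {e : ι → S → ℂ} (he : OrthonormalFamily e)
    (i j : ι) :
    ketBra (e i) (e i) * ketBra (e j) (e j) = if i = j then ketBra (e i) (e i) else 0 := by
  rw [ketBra, ketBra, vecMulVec_mul_vecMulVec, he i j]
  split_ifs <;> simp_all

theorem OrthonormalFamily.trace_ketBra [Fintype S] {e : ι → S → ℂ} (he : OrthonormalFamily e)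
    (i : ι) :
    (ketBra (e i) (e i)).trace = 1 := by
  simpa [ketBra, dotProduct_comm] using he i i

theorem OrthonormalFamily.ketBra_kronecker_sandwich [Fintype S] {e : ι → S → ℂ}
    (he : OrthonormalFamily e) (T Y : Matrix E E ℂ) (i j : ι) :
    (ketBra (e i) (e i) ⊗ₖ T) * (ketBra (e j) (e j) ⊗ₖ Y) * (ketBra (e i) (e i) ⊗ₖ T) =
      if i = j then ketBra (e i) (e i) ⊗ₖ (T * Y * T) else 0 := by
  rw [← mul_kronecker_mul, ← mul_kronecker_mul, he.ketBra_mul_ketBra]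
  split_ifs with hij
  · rw [he.ketBra_mul_ketBra, if_pos rfl]
  · rw [Matrix.zero_mul, zero_kronecker]

end SystemEnvironment

section SpectrumBroadcast

variable {S ι : Type*} [Fintype S] [Fintype ι] [DecidableEq ι] {N : ℕ} {D : Fin N → ℕ}
  {ρ : Matrix (S × ∀ k, Fin (D k)) (S × ∀ k, Fin (D k)) ℂ} {e : ι → S → ℂ}
  {σ : ι → Matrix (∀ k, Fin (D k)) (∀ k, Fin (D k)) ℂ}

/-- A spectrum broadcast structure with unnormalised environment states `σ i = p i • ϱ i`;
dropping the weights removes the side conditions `0 < p i`. -/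
structure IsSBSDecomposition (ρ : Matrix (S × ∀ k, Fin (D k)) (S × ∀ k, Fin (D k)) ℂ)
    (e : ι → S → ℂ) (σ : ι → Matrix (∀ k, Fin (D k)) (∀ k, Fin (D k)) ℂ) : Prop where
  orthonormal : OrthonormalFamily e
  posSemidef : ∀ i, (σ i).PosSemidef
  eq_sum : ρ = ∑ i, ketBra (e i) (e i) ⊗ₖ σ i
  reduceTo_mul_reduceTo : ∀ K : Finset (Fin N), K.Nonempty → ∀ i j, i ≠ j →
    reduceTo K (σ i) * reduceTo K (σ j) = 0

theorem isSBSDecomposition_of_sum_sandwich (hρ : ρ.PosSemidef) (he : OrthonormalFamily e)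
    {P : ∀ k : Fin N, ι → Matrix (Fin (D k)) (Fin (D k)) ℂ}
    (hP_idem : ∀ k i, P k i * P k i = P k i) (hP_herm : ∀ k i, (P k i)ᴴ = P k i)
    (hP_orth : ∀ k, ∀ i j, i ≠ j → P k i * P k j = 0)
    (hsum : ∑ i, (ketBra (e i) (e i) ⊗ₖ tensorFamily (fun k => P k i)) * ρ *
      (ketBra (e i) (e i) ⊗ₖ tensorFamily (fun k => P k i)) = ρ) :
    IsSBSDecomposition ρ e fun i =>
      (ketKron (∀ k, Fin (D k)) (e i) * tensorFamily (fun k => P k i))ᴴ * ρ *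
        (ketKron (∀ k, Fin (D k)) (e i) * tensorFamily (fun k => P k i)) := by
  have hT : ∀ i, (tensorFamily fun k => P k i)ᴴ = tensorFamily fun k => P k i := fun i => by
    rw [conjTranspose_tensorFamily]
    simp only [hP_herm]
  refine ⟨he, fun i => hρ.conjTranspose_mul_mul_same _, ?_, ?_⟩
  · conv_lhs => rw [← hsum]
    simp only [ketBra_kronecker_conjTranspose_mul_mul, hT]
  · rintro K ⟨k, hk⟩ i j hij
    have hTA : ∀ i, (tensorFamily fun k => P k i) *
        (tensorFamily fun l => if l ∈ K then P l i else 1) = tensorFamily fun k => P k i := by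
      intro i
      rw [tensorFamily_mul]
      congr 1
      funext l
      split_ifs <;> simp [hP_idem]
    have hA : (tensorFamily fun l => if l ∈ K then P l j else 1)ᴴ =
        tensorFamily fun l => if l ∈ K then P l j else 1 := by
      rw [conjTranspose_tensorFamily]
      congr 1
      funext l
      split_ifs <;> simp [hP_herm]
    refine reduceTo_mul_reduceTo_eq_zero (M := fun l => if l ∈ K then P l i else 1)
      (M' := fun l => if l ∈ K then P l j else 1) (fun l hl => if_neg hl) (fun l hl => if_neg hl)
      ?_ ?_ hk (by simp [hk, hP_orth k i j hij])
    · simp only [Matrix.mul_assoc, hTA]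
    · rw [← hA]
      simp only [← Matrix.mul_assoc, ← conjTranspose_mul]
      rw [Matrix.mul_assoc (ketKron _ _), hTA]

theorem IsSBSDecomposition.exists_projectors (h : IsSBSDecomposition ρ e σ) :
    ∃ P : ∀ k : Fin N, ι → Matrix (Fin (D k)) (Fin (D k)) ℂ,
      (∀ k i, P k i * P k i = P k i) ∧ (∀ k i, (P k i)ᴴ = P k i) ∧
      (∀ k, ∀ i j, i ≠ j → P k i * P k j = 0) ∧
      ∑ i, (ketBra (e i) (e i) ⊗ₖ tensorFamily (fun k => P k i)) * ρ *
        (ketBra (e i) (e i) ⊗ₖ tensorFamily (fun k => P k i)) = ρ := by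
  set P : ∀ k : Fin N, ι → Matrix (Fin (D k)) (Fin (D k)) ℂ := fun k i =>
    let toFactor : (∀ l : ({k} : Finset (Fin N)), Fin (D l.1)) ≃ Fin (D k) := Equiv.piUnique _
    (supportProj (reduceTo {k} (σ i))).submatrix toFactor.symm toFactor.symm
  have hP : ∀ k i, tensorOn {k} (fun k => P k i) = supportProj (reduceTo {k} (σ i)) := by
    intro k i
    simp only [tensorOn_singleton, P, submatrix_submatrix, Equiv.symm_comp_self, submatrix_id_id]
  have hred : ∀ k i, (reduceTo {k} (σ i)).IsHermitian := fun k i =>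
    (h.posSemidef i).isHermitian.reduceTo {k}
  have hP_herm : ∀ k i, (P k i).IsHermitian := fun k i =>
    (isHermitian_supportProj _).submatrix _
  have hTσ : ∀ i, tensorFamily (fun k => P k i) * σ i * tensorFamily (fun k => P k i) = σ i := by
    intro i
    have hσT := (h.posSemidef i).mul_tensorFamily_eq_self_of_forall_singleton
      (fun k => hP_herm k i) fun k => by rw [hP]; exact supportProj_mul_self (hred k i)
    have hTσ' : tensorFamily (fun k => P k i) * σ i = σ i := by
      simpa [conjTranspose_tensorFamily, (hP_herm _ i).eq, (h.posSemidef i).isHermitian.eq]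
        using congrArg (·ᴴ) hσT
    rw [hTσ', hσT]
  refine ⟨P, fun k i => ?_, fun k i => hP_herm k i, fun k i j hij => ?_, ?_⟩
  · simp only [P, submatrix_mul_equiv, supportProj_mul_supportProj]
  · simp only [P, submatrix_mul_equiv, supportProj_mul_supportProj_eq_zero (hred k i) (hred k j)
      (h.reduceTo_mul_reduceTo {k} (Finset.singleton_nonempty k) i j hij)]
    rfl
  · conv_lhs => rw [h.eq_sum]
    simp only [Finset.mul_sum, Finset.sum_mul, h.orthonormal.ketBra_kronecker_sandwich,
      Finset.sum_ite_eq, Finset.mem_univ, if_true, hTσ]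
    exact h.eq_sum.symm

theorem IsSBSDecomposition.exists_normalized (hρ : ρ.trace = 1) (h : IsSBSDecomposition ρ e σ) :
    ∃ (p : ι → ℝ) (ϱ : ι → Matrix (∀ k, Fin (D k)) (∀ k, Fin (D k)) ℂ),
      (∀ i, 0 ≤ p i) ∧ (∑ i, p i = 1) ∧ (∀ i, IsDensityMatrix (ϱ i)) ∧
      ρ = ∑ i, (p i : ℂ) • (ketBra (e i) (e i) ⊗ₖ ϱ i) ∧
      (∀ K : Finset (Fin N), K.Nonempty → ∀ i j, i ≠ j → 0 < p i → 0 < p j →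
        reduceTo K (ϱ i) * reduceTo K (ϱ j) = 0) := by
  have : Nonempty (∀ k, Fin (D k)) := by
    by_contra hE
    rw [not_nonempty_iff] at hE
    simp [trace_eq_zero_of_isEmpty] at hρ
  choose ϱ hϱ hσϱ using fun i => (h.posSemidef i).exists_eq_smul_isDensityMatrix
  refine ⟨fun i => (σ i).trace.re, ϱ, fun i => ?_, ?_, hϱ, ?_, ?_⟩
  · exact (h.posSemidef i).re_trace_nonneg
  · have htr : ρ.trace = ∑ i, (σ i).trace := by
      conv_lhs => rw [h.eq_sum]
      simp only [trace_sum, trace_kronecker, h.orthonormal.trace_ketBra, one_mul]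
    have : ((∑ i, (σ i).trace.re : ℝ) : ℂ) = 1 := by
      push_cast
      simp_rw [← (h.posSemidef _).trace_eq_re]
      rw [← htr, hρ]
    exact_mod_cast this
  · conv_lhs => rw [h.eq_sum]
    simp only [← kronecker_smul, ← hσϱ]
  · intro K hK i j hij hi hj
    have := h.reduceTo_mul_reduceTo K hK i j hij
    rw [hσϱ i, hσϱ j, reduceTo_smul, reduceTo_smul, smul_mul_smul_comm, smul_eq_zero] at this
    exact this.resolve_left (by exact_mod_cast (mul_pos hi hj).ne')

theorem isSBSDecomposition_of_normalized (he : OrthonormalFamily e) {p : ι → ℝ}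
    (hp : ∀ i, 0 ≤ p i) {ϱ : ι → Matrix (∀ k, Fin (D k)) (∀ k, Fin (D k)) ℂ}
    (hϱ : ∀ i, IsDensityMatrix (ϱ i)) (hρ : ρ = ∑ i, (p i : ℂ) • (ketBra (e i) (e i) ⊗ₖ ϱ i))
    (horth : ∀ K : Finset (Fin N), K.Nonempty → ∀ i j, i ≠ j → 0 < p i → 0 < p j →
      reduceTo K (ϱ i) * reduceTo K (ϱ j) = 0) :
    IsSBSDecomposition ρ e fun i => (p i : ℂ) • ϱ i := by
  refine ⟨he, fun i => (hϱ i).1.smul (Complex.zero_le_real.mpr (hp i)), ?_, ?_⟩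
  · simp only [hρ, kronecker_smul]
  · intro K hK i j hij
    rw [reduceTo_smul, reduceTo_smul, smul_mul_smul_comm]
    rcases (hp i).eq_or_lt with hi | hi
    · simp [← hi]
    rcases (hp j).eq_or_lt with hj | hj
    · simp [← hj]
    rw [horth K hK i j hij hi hj, smul_zero]

end SpectrumBroadcast

/-- Generalized SBS theorem: Bohr non-disturbance of a product projective measurement
(objectivity) is equivalent to the generalized Spectrum Broadcast Structure. -/
theorem stmt_7 {d N : ℕ} {D : Fin N → ℕ}
    (ρ : Matrix (Fin d × ∀ k, Fin (D k)) (Fin d × ∀ k, Fin (D k)) ℂ)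
    (hρ : IsDensityMatrix ρ) :
    (∃ (m : ℕ) (e : Fin m → Fin d → ℂ)
        (P : ∀ k : Fin N, Fin m → Matrix (Fin (D k)) (Fin (D k)) ℂ),
        OrthonormalFamily e ∧
        (∀ k i, P k i * P k i = P k i) ∧
        (∀ k i, (P k i)ᴴ = P k i) ∧
        (∀ k, ∀ i j, i ≠ j → P k i * P k j = 0) ∧
        ∑ i, (ketBra (e i) (e i) ⊗ₖ tensorFamily (fun k => P k i)) * ρ *
            (ketBra (e i) (e i) ⊗ₖ tensorFamily (fun k => P k i)) = ρ)
    ↔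
    (∃ (m : ℕ) (e : Fin m → Fin d → ℂ) (p : Fin m → ℝ)
        (ϱ : Fin m → Matrix (∀ k, Fin (D k)) (∀ k, Fin (D k)) ℂ),
        OrthonormalFamily e ∧
        (∀ i, 0 ≤ p i) ∧ (∑ i, p i = 1) ∧
        (∀ i, IsDensityMatrix (ϱ i)) ∧
        ρ = ∑ i, (p i : ℂ) • (ketBra (e i) (e i) ⊗ₖ ϱ i) ∧
        (∀ K : Finset (Fin N), K.Nonempty → ∀ i j, i ≠ j → 0 < p i → 0 < p j →
          reduceTo K (ϱ i) * reduceTo K (ϱ j) = 0)) := by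
  constructor
  · rintro ⟨m, e, P, he, hP_idem, hP_herm, hP_orth, hsum⟩
    obtain ⟨p, ϱ, h⟩ := (isSBSDecomposition_of_sum_sandwich hρ.1 he hP_idem hP_herm hP_orth
      hsum).exists_normalized hρ.2
    exact ⟨m, e, p, ϱ, he, h⟩
  · rintro ⟨m, e, p, ϱ, he, hp, -, hϱ, hρ_eq, horth⟩
    obtain ⟨P, hP⟩ := (isSBSDecomposition_of_normalized he hp hϱ hρ_eq horth).exists_projectors
    exact ⟨m, e, P, he, hP⟩
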